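/- arXiv:1806.10868 — 5 statements merged into one kernel-verified Lean document; each statement's English description precedes it below -/
import Mathlib

section
/- Every face F of the cone S^n_+ of n×n positive semidefinite matrices is of the form F = {X ∈ S^n : X ⪰ 0 and range X ⊆ R} for some linear subspace R of ℝ^n; this establishes a correspondence between linear subspaces of ℝ^n and faces of S^n_+. -/
open Matrix

/-- A convex cone: a set closed under addition and under scaling by nonnegative reals. -/
def IsConvexCone {E : Type*} [AddCommMonoid E] [SMul ℝ E] (S : Set E) : Prop :=
  (∀ x ∈ S, ∀ y ∈ S, x + y ∈ S) ∧ ∀ c : ℝ, 0 ≤ c → ∀ x ∈ S, c • x ∈ S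

/-- `F` is a face of the convex cone `K`: a convex subcone such that
`x, y ∈ K`, `x + y ∈ F` implies `x ∈ F` and `y ∈ F`. -/
def IsFaceOf {E : Type*} [AddCommMonoid E] [SMul ℝ E] (K F : Set E) : Prop :=
  IsConvexCone F ∧ F ⊆ K ∧ ∀ x ∈ K, ∀ y ∈ K, x + y ∈ F → x ∈ F ∧ y ∈ F

/-!
For a nonempty face `F` of the positive semidefinite cone, the vectors `c` with `c cᵀ ∈ F` form a
subspace `R`: closure under addition follows from the parallelogram law
`(c + d)(c + d)ᵀ + (c - d)(c - d)ᵀ = 2 c cᵀ + 2 d dᵀ` and the face property. Every PSD matrix is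
a sum `∑ vᵢ vᵢᵀ` whose vectors `vᵢ` span its range (its range is that of `Bᵀ B` for `B` with rows
`vᵢ`, which equals the range of `Bᵀ` by a rank count). Since a face contains a sum of PSD matrices
exactly when it contains every summand, a PSD matrix lies in `F` iff all `vᵢ` lie in `R`, i.e.
iff its range lies in `R`.
-/

namespace IsFaceOf

variable {E : Type*} [AddCommMonoid E] [Module ℝ E] {K F : Set E}

theorem zero_mem (hF : IsFaceOf K F) (hne : F.Nonempty) : (0 : E) ∈ F := by
  obtain ⟨x, hx⟩ := hne
  simpa using hF.1.2 0 le_rfl x hx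

theorem sum_mem (hF : IsFaceOf K F) (hne : F.Nonempty) {ι : Type*} {s : Finset ι}
    {f : ι → E} (h : ∀ i ∈ s, f i ∈ F) : ∑ i ∈ s, f i ∈ F :=
  Finset.sum_induction f (· ∈ F) (fun a b ha hb => hF.1.1 a ha b hb) (hF.zero_mem hne) h

theorem mem_of_sum_mem (hF : IsFaceOf K F) (hK : IsConvexCone K) (hK₀ : (0 : E) ∈ K)
    {ι : Type*} {s : Finset ι} {f : ι → E} (hfK : ∀ i ∈ s, f i ∈ K)
    (hsum : ∑ i ∈ s, f i ∈ F) {i : ι} (hi : i ∈ s) : f i ∈ F := by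
  classical
  rw [← Finset.add_sum_erase s f hi] at hsum
  have hrest : ∑ j ∈ s.erase i, f j ∈ K :=
    Finset.sum_induction f (· ∈ K) (fun a b ha hb => hK.1 a ha b hb) hK₀
      fun j hj => hfK j (Finset.mem_of_mem_erase hj)
  exact (hF.2.2 _ (hfK i hi) _ hrest hsum).1

end IsFaceOf

namespace Matrix

variable {ι m : Type*}

theorem transpose_mul_self_eq_sum_vecMulVec [Fintype m] {α : Type*}
    [NonUnitalNonAssocSemiring α] (B : Matrix m ι α) : Bᵀ * B = ∑ i, vecMulVec (B i) (B i) := by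
  ext j k
  simp [mul_apply, Matrix.sum_apply, vecMulVec_apply]

theorem range_mulVecLin_transpose_mul_self [Fintype ι] [Fintype m] {R : Type*} [Field R]
    [LinearOrder R] [IsStrictOrderedRing R] (B : Matrix m ι R) :
    LinearMap.range (Bᵀ * B).mulVecLin = LinearMap.range Bᵀ.mulVecLin := by
  refine Submodule.eq_of_le_of_finrank_eq ?_ ?_
  · rw [mulVecLin_mul]
    exact LinearMap.range_comp_le_range _ _
  · rw [← rank, ← rank, rank_transpose_mul_self, rank_transpose]

theorem isConvexCone_posSemidef : IsConvexCone {X : Matrix ι ι ℝ | X.PosSemidef} :=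
  ⟨fun _ hX _ hY => hX.add hY, fun _ hc _ hX => hX.smul hc⟩

theorem posSemidef_vecMulVec_self [Fintype ι] (v : ι → ℝ) : (vecMulVec v v).PosSemidef := by
  simpa using posSemidef_vecMulVec_star_self v

theorem PosSemidef.exists_eq_sum_vecMulVec_self [Fintype ι] {X : Matrix ι ι ℝ}
    (hX : X.PosSemidef) :
    ∃ (k : ℕ) (v : Fin k → ι → ℝ), X = ∑ i, vecMulVec (v i) (v i) ∧
      LinearMap.range X.mulVecLin = Submodule.span ℝ (Set.range v) := by
  obtain ⟨k, v, rfl⟩ := posSemidef_iff_eq_sum_vecMulVec.mp hX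
  simp only [star_trivial]
  refine ⟨k, v, rfl, ?_⟩
  rw [show ∑ i, vecMulVec (v i) (v i) = (of v)ᵀ * of v from
      (transpose_mul_self_eq_sum_vecMulVec (of v)).symm,
    range_mulVecLin_transpose_mul_self, range_mulVecLin]
  rfl

end Matrix

namespace IsFaceOf

variable {ι : Type*} [Fintype ι] {F : Set (Matrix ι ι ℝ)}

def rankOneSubmodule (hF : IsFaceOf {X : Matrix ι ι ℝ | X.PosSemidef} F) (hne : F.Nonempty) :
    Submodule ℝ (ι → ℝ) where
  carrier := {c | vecMulVec c c ∈ F}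
  zero_mem' := by simpa using hF.zero_mem hne
  add_mem' {c d} hc hd := by
    have hpar : vecMulVec (c + d) (c + d) + vecMulVec (c - d) (c - d) =
        (2 : ℝ) • vecMulVec c c + (2 : ℝ) • vecMulVec d d := by
      ext i j
      simp only [Matrix.add_apply, Matrix.smul_apply, vecMulVec_apply, Pi.add_apply, Pi.sub_apply,
        smul_eq_mul]
      ring
    have h2 : (2 : ℝ) • vecMulVec c c + (2 : ℝ) • vecMulVec d d ∈ F :=
      hF.1.1 _ (hF.1.2 2 zero_le_two _ hc) _ (hF.1.2 2 zero_le_two _ hd)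
    rw [← hpar] at h2
    exact (hF.2.2 _ (posSemidef_vecMulVec_self _) _ (posSemidef_vecMulVec_self _) h2).1
  smul_mem' t c hc := by
    have h : vecMulVec (t • c) (t • c) = (t ^ 2) • vecMulVec c c := by
      rw [smul_vecMulVec, vecMulVec_smul, smul_smul, sq]
    change vecMulVec (t • c) (t • c) ∈ F
    exact h ▸ hF.1.2 _ (sq_nonneg t) _ hc

theorem mem_iff_range_le_rankOneSubmodule
    (hF : IsFaceOf {X : Matrix ι ι ℝ | X.PosSemidef} F) (hne : F.Nonempty)
    {X : Matrix ι ι ℝ} (hX : X.PosSemidef) :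
    X ∈ F ↔ LinearMap.range X.mulVecLin ≤ hF.rankOneSubmodule hne := by
  obtain ⟨k, v, rfl, hrange⟩ := hX.exists_eq_sum_vecMulVec_self
  rw [hrange, Submodule.span_le, Set.range_subset_iff]
  change _ ↔ ∀ i, vecMulVec (v i) (v i) ∈ F
  exact ⟨fun hsum i => hF.mem_of_sum_mem isConvexCone_posSemidef PosSemidef.zero
      (fun j _ => posSemidef_vecMulVec_self (v j)) hsum (Finset.mem_univ i),
    fun hv => hF.sum_mem hne fun i _ => hv i⟩

end IsFaceOf

/-- Every (nonempty) face `F` of the cone of `n×n` positive semidefinite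
matrices is of the form `F = {X ∈ S^n : X ⪰ 0 and range X ⊆ R}` for some linear
subspace `R` of `ℝ^n`. -/
theorem face_of_psd_cone_eq_range_face (n : ℕ)
    (F : Set (Matrix (Fin n) (Fin n) ℝ))
    (hFne : F.Nonempty)
    (hF : IsFaceOf {X : Matrix (Fin n) (Fin n) ℝ | X.PosSemidef} F) :
    ∃ R : Submodule ℝ (Fin n → ℝ),
      F = {X : Matrix (Fin n) (Fin n) ℝ |
        X.PosSemidef ∧ LinearMap.range X.mulVecLin ≤ R} := by
  refine ⟨hF.rankOneSubmodule hFne, Set.ext fun X => ?_⟩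
  exact ⟨fun hX => ⟨hF.2.1 hX, (hF.mem_iff_range_le_rankOneSubmodule hFne (hF.2.1 hX)).mp hX⟩,
    fun ⟨hX, hR⟩ => (hF.mem_iff_range_le_rankOneSubmodule hFne hX).mpr hR⟩
end

section
/- Let K be a closed convex cone in a finite-dimensional real vector space. Then the relative interiors of the faces of K partition K: every point of K lies in the relative interior of exactly one face of K. -/
/-- The relative interior of a convex set `C`: the points `x ∈ C` such that for every
`y ∈ C` there are `z ∈ C` and `0 < α < 1` with `x = α • y + (1 - α) • z`. -/
def relint {E : Type*} [AddCommGroup E] [Module ℝ E] (C : Set E) : Set E :=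
  {x ∈ C | ∀ y ∈ C, ∃ z ∈ C, ∃ α : ℝ, 0 < α ∧ α < 1 ∧ x = α • y + (1 - α) • z}

namespace IsConvexCone

section AddCommMonoid

variable {E : Type*} [AddCommMonoid E] [SMul ℝ E] {S : Set E}

theorem add_mem (hS : IsConvexCone S) {x y : E} (hx : x ∈ S) (hy : y ∈ S) : x + y ∈ S :=
  hS.1 x hx y hy

theorem smul_mem (hS : IsConvexCone S) {c : ℝ} (hc : 0 ≤ c) {x : E} (hx : x ∈ S) :
    c • x ∈ S :=
  hS.2 c hc x hx

end AddCommMonoid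

variable {E : Type*} [AddCommGroup E] [Module ℝ E] {S : Set E}

theorem mem_relint_iff (hS : IsConvexCone S) {x : E} :
    x ∈ relint S ↔ x ∈ S ∧ ∀ y ∈ S, ∃ t : ℝ, 0 < t ∧ t • x - y ∈ S := by
  refine ⟨fun ⟨hxS, hx⟩ => ⟨hxS, fun y hy => ?_⟩, fun ⟨hxS, hx⟩ => ⟨hxS, fun y hy => ?_⟩⟩
  · obtain ⟨z, hzS, α, hα0, hα1, rfl⟩ := hx y hy
    refine ⟨α⁻¹, inv_pos.mpr hα0, ?_⟩
    have hdecomp : α⁻¹ • (α • y + (1 - α) • z) - y = (α⁻¹ * (1 - α)) • z := by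
      rw [smul_add, smul_smul, inv_mul_cancel₀ hα0.ne', one_smul, mul_smul, add_sub_cancel_left]
    rw [hdecomp]
    exact hS.smul_mem (mul_nonneg (inv_pos.mpr hα0).le (sub_nonneg.mpr hα1.le)) hzS
  · obtain ⟨t, ht, hw⟩ := hx y hy
    refine ⟨t⁻¹ • (x + (t • x - y)), hS.smul_mem (inv_nonneg.mpr ht.le) (hS.add_mem hxS hw),
      (1 + t)⁻¹, by positivity, inv_lt_one_of_one_lt₀ (by linarith), ?_⟩
    have h1t : (1 + t) ≠ 0 := by positivity
    have hcoef : (1 - (1 + t)⁻¹) * t⁻¹ = (1 + t)⁻¹ := by field_simp; ring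
    have hsum : y + (x + (t • x - y)) = (1 + t) • x := by rw [add_smul, one_smul]; abel
    rw [smul_smul, hcoef, ← smul_add, hsum, smul_smul, inv_mul_cancel₀ h1t, one_smul]

end IsConvexCone

section MinimalFace

variable {E : Type*} [AddCommGroup E] [Module ℝ E] {K F : Set E} {x : E}

def minimalFace (K : Set E) (x : E) : Set E :=
  {y ∈ K | ∃ t : ℝ, 0 < t ∧ t • x - y ∈ K}

theorem minimalFace_subset : minimalFace K x ⊆ K := fun _ hy => hy.1

theorem self_mem_minimalFace (hx : x ∈ K) : x ∈ minimalFace K x :=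
  ⟨hx, 2, two_pos, by rwa [two_smul, add_sub_cancel_right]⟩

theorem isConvexCone_minimalFace (hK : IsConvexCone K) (hx : x ∈ K) :
    IsConvexCone (minimalFace K x) := by
  refine ⟨?_, fun c hc y ⟨hyK, t, ht, hty⟩ => ⟨hK.smul_mem hc hyK, ?_⟩⟩
  · rintro y ⟨hyK, s, hs, hsy⟩ z ⟨hzK, t, ht, htz⟩
    refine ⟨hK.add_mem hyK hzK, s + t, add_pos hs ht, ?_⟩
    have hsplit : (s + t) • x - (y + z) = (s • x - y) + (t • x - z) := by rw [add_smul]; abel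
    exact hsplit ▸ hK.add_mem hsy htz
  · rcases hc.eq_or_lt with rfl | hc
    · exact ⟨1, one_pos, by rwa [zero_smul, sub_zero, one_smul]⟩
    · refine ⟨c * t, mul_pos hc ht, ?_⟩
      rw [mul_smul, ← smul_sub]
      exact hK.smul_mem hc.le hty

theorem isFaceOf_minimalFace (hK : IsConvexCone K) (hx : x ∈ K) :
    IsFaceOf K (minimalFace K x) := by
  refine ⟨isConvexCone_minimalFace hK hx, minimalFace_subset, ?_⟩
  rintro y hyK z hzK ⟨-, t, ht, htyz⟩
  refine ⟨⟨hyK, t, ht, ?_⟩, ⟨hzK, t, ht, ?_⟩⟩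
  · have hsplit : t • x - y = (t • x - (y + z)) + z := by abel
    exact hsplit ▸ hK.add_mem htyz hzK
  · have hsplit : t • x - z = (t • x - (y + z)) + y := by abel
    exact hsplit ▸ hK.add_mem htyz hyK

theorem mem_relint_minimalFace (hK : IsConvexCone K) (hx : x ∈ K) :
    x ∈ relint (minimalFace K x) := by
  refine (isConvexCone_minimalFace hK hx).mem_relint_iff.mpr ⟨self_mem_minimalFace hx, ?_⟩
  rintro y ⟨hyK, t, ht, hty⟩
  exact ⟨t, ht, hty, t, ht, by rwa [sub_sub_cancel]⟩

theorem IsFaceOf.minimalFace_subset_of_mem (hF : IsFaceOf K F) (hxF : x ∈ F) :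
    minimalFace K x ⊆ F := by
  rintro y ⟨hyK, t, ht, hty⟩
  have htx : (t • x - y) + y ∈ F := by
    rw [sub_add_cancel]
    exact hF.1.smul_mem ht.le hxF
  exact (hF.2.2 _ hty _ hyK htx).2

theorem IsConvexCone.subset_minimalFace_of_mem_relint (hF : IsConvexCone F) (hFK : F ⊆ K)
    (hx : x ∈ relint F) : F ⊆ minimalFace K x := fun y hy =>
  let ⟨t, ht, hty⟩ := (hF.mem_relint_iff.mp hx).2 y hy
  ⟨hFK hy, t, ht, hFK hty⟩

theorem IsFaceOf.eq_minimalFace_of_mem_relint (hF : IsFaceOf K F) (hx : x ∈ relint F) :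
    F = minimalFace K x :=
  (hF.1.subset_minimalFace_of_mem_relint hF.2.1 hx).antisymm
    (hF.minimalFace_subset_of_mem hx.1)

end MinimalFace

theorem relint_faces_partition_general
    {E : Type*} [NormedAddCommGroup E] [NormedSpace ℝ E]
    (K : Set E) (hK : IsConvexCone K) :
    ∀ x ∈ K, ∃! F : Set E, IsFaceOf K F ∧ x ∈ relint F :=
  fun _ hx => ⟨minimalFace K _, ⟨isFaceOf_minimalFace hK hx, mem_relint_minimalFace hK hx⟩,
    fun _ ⟨hF, hxF⟩ => hF.eq_minimalFace_of_mem_relint hxF⟩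

/-- For a closed convex cone `K` in a finite-dimensional real vector space,
the relative interiors of the faces of `K` partition `K`: every point of `K` lies in the
relative interior of exactly one face of `K`. -/
theorem relint_faces_partition
    {E : Type*} [NormedAddCommGroup E] [NormedSpace ℝ E] [FiniteDimensional ℝ E]
    (K : Set E) (hK : IsConvexCone K) (hKcl : IsClosed K) :
    ∀ x ∈ K, ∃! F : Set E, IsFaceOf K F ∧ x ∈ relint F :=
  relint_faces_partition_general K hK
end

section
/- (Correctness of one facial reduction step.) Let C, A₁, …, A_m ∈ S^n and b ∈ ℝ^m, and suppose y ∈ ℝ^m satisfies W := Σᵢ yᵢ Aᵢ ⪰ 0 and Σᵢ bᵢ yᵢ = 0. Let r = dim(ker W) and let V ∈ ℝ^{n×r} be a matrix whose columns form an orthonormal basis of ker W. Then the map X' ↦ V X' Vᵀ is a bijection from the feasible set {X' ∈ S^r : X' ⪰ 0, Aᵢ • (V X' Vᵀ) = bᵢ for all i} of the reduced problem onto the feasible set {X ∈ S^n : X ⪰ 0, Aᵢ • X = bᵢ for all i} of the original problem, and it preserves the objective: C • (V X' Vᵀ) = (VᵀCV) • X'. Consequently the two problems have equal optimal values. -/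
/-!
If `X` is feasible, then `W • X = Σᵢ yᵢ (Aᵢ • X) = Σᵢ yᵢ bᵢ = 0`; for positive semidefinite
`W` and `X` this forces `W X = 0`, so every column of `X` lies in `ker W = range V`, and `V Vᵀ`, the
orthogonal projection onto `range V`, fixes `X` on both sides. Hence `X ↦ Vᵀ X V` inverts
`X' ↦ V X' Vᵀ` between the two feasible sets, and the objectives agree by cyclicity of the
trace.
-/

open Matrix
open scoped BigOperators

namespace Matrix

variable {n k : Type*} [Fintype n] [Fintype k]

open scoped ComplexOrder MatrixOrder in
theorem PosSemidef.mul_eq_zero_of_trace_mul_eq_zero {𝕜 : Type*} [RCLike 𝕜]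
    {A B : Matrix n n 𝕜} (hA : A.PosSemidef) (hB : B.PosSemidef) (h : (A * B).trace = 0) :
    A * B = 0 := by
  classical
  obtain ⟨P, rfl⟩ := CStarAlgebra.nonneg_iff_eq_star_mul_self.mp hA.nonneg
  obtain ⟨Q, rfl⟩ := CStarAlgebra.nonneg_iff_eq_star_mul_self.mp hB.nonneg
  simp only [star_eq_conjTranspose] at h ⊢
  -- `tr (PᴴP QᴴQ)` is the squared Frobenius norm of `Q Pᴴ`.
  have hQP : Q * Pᴴ = 0 := by
    rw [← trace_conjTranspose_mul_self_eq_zero_iff, ← h, conjTranspose_mul,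
      conjTranspose_conjTranspose, ← Matrix.mul_assoc, Matrix.mul_assoc P, trace_mul_cycle]
  calc Pᴴ * P * (Qᴴ * Q) = Pᴴ * (Q * Pᴴ)ᴴ * Q := by
        simp only [conjTranspose_mul, conjTranspose_conjTranspose, Matrix.mul_assoc]
    _ = 0 := by simp [hQP]

theorem range_mulVecLin_le_ker_of_mul_eq_zero {R : Type*} [CommSemiring R] {W X : Matrix n n R}
    (h : W * X = 0) : LinearMap.range X.mulVecLin ≤ LinearMap.ker W.mulVecLin := by
  rintro _ ⟨v, rfl⟩
  simp [mulVec_mulVec, h]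

theorem mul_transpose_mul_eq_self_of_range_le {R : Type*} [CommSemiring R] [DecidableEq k]
    {V : Matrix n k R} {X : Matrix n n R} (hV : Vᵀ * V = 1)
    (hX : LinearMap.range X.mulVecLin ≤ LinearMap.range V.mulVecLin) : V * Vᵀ * X = X := by
  refine ext_iff_mulVec.mpr fun v => ?_
  obtain ⟨c, hc⟩ := hX ⟨v, rfl⟩
  simp only [mulVecLin_apply] at hc
  rw [← mulVec_mulVec, ← hc, mulVec_mulVec, Matrix.mul_assoc, hV, Matrix.mul_one]

theorem trace_transpose_sum_smul_mul {ι R : Type*} [Fintype ι] [CommSemiring R] (y : ι → R)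
    (A : ι → Matrix n n R) (X : Matrix n n R) :
    ((∑ i, y i • A i)ᵀ * X).trace = ∑ i, y i * ((A i)ᵀ * X).trace := by
  simp [transpose_sum, Finset.sum_mul, trace_sum]

theorem trace_transpose_mul_conj {R : Type*} [CommSemiring R] (C : Matrix n n R)
    (V : Matrix n k R) (X : Matrix k k R) :
    (Cᵀ * (V * X * Vᵀ)).trace = ((Vᵀ * C * V)ᵀ * X).trace := by
  rw [transpose_mul, transpose_mul, transpose_transpose, ← trace_mul_cycle]
  simp only [Matrix.mul_assoc]

theorem bijOn_conj_of_mul_transpose_mul_eq_self [DecidableEq k] {V : Matrix n k ℝ}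
    {L : Set (Matrix n n ℝ)} (hV : Vᵀ * V = 1)
    (hL : ∀ X, X.PosSemidef → X ∈ L → V * Vᵀ * X = X) :
    Set.BijOn (fun X' : Matrix k k ℝ => V * X' * Vᵀ)
      {X' | X'.PosSemidef ∧ V * X' * Vᵀ ∈ L} {X | X.PosSemidef ∧ X ∈ L} := by
  have hinv : ∀ X ∈ {X | X.PosSemidef ∧ X ∈ L}, V * (Vᵀ * X * V) * Vᵀ = X := by
    rintro X ⟨hX, hXL⟩
    have hleft : V * Vᵀ * X = X := hL X hX hXL
    have hright : X * (V * Vᵀ) = X := by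
      simpa only [transpose_mul, transpose_transpose, Matrix.mul_assoc,
        (isHermitian_iff_isSymm.mp hX.isHermitian).eq] using congrArg transpose hleft
    calc V * (Vᵀ * X * V) * Vᵀ = V * Vᵀ * X * (V * Vᵀ) := by simp only [Matrix.mul_assoc]
      _ = X := by rw [hleft, hright]
  refine Set.InvOn.bijOn (f' := fun X : Matrix n n ℝ => Vᵀ * X * V) ⟨fun X' _ => ?_, hinv⟩
    (fun X' ⟨hX', hX'L⟩ => ⟨?_, hX'L⟩) (fun X hX => ⟨?_, (hinv X hX).symm ▸ hX.2⟩)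
  · change Vᵀ * (V * X' * Vᵀ) * V = X'
    rw [← Matrix.mul_assoc, ← Matrix.mul_assoc, hV, Matrix.one_mul, Matrix.mul_assoc, hV,
      Matrix.mul_one]
  · simpa [conjTranspose_eq_transpose_of_trivial] using hX'.mul_mul_conjTranspose_same V
  · simpa [conjTranspose_eq_transpose_of_trivial] using hX.1.conjTranspose_mul_mul_same V

end Matrix

theorem facial_reduction_step_correct_general (n r m : ℕ)
    (C : Matrix (Fin n) (Fin n) ℝ)
    (A : Fin m → Matrix (Fin n) (Fin n) ℝ)
    (b : Fin m → ℝ) (y : Fin m → ℝ)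
    (hW : (∑ i, y i • A i).PosSemidef)
    (hby : ∑ i, b i * y i = 0)
    (V : Matrix (Fin n) (Fin r) ℝ)
    (hVortho : Vᵀ * V = 1)
    (hVspan : LinearMap.range V.mulVecLin =
      LinearMap.ker (∑ i, y i • A i).mulVecLin) :
    Set.BijOn (fun X' : Matrix (Fin r) (Fin r) ℝ => V * X' * Vᵀ)
      {X' : Matrix (Fin r) (Fin r) ℝ |
        X'.PosSemidef ∧ ∀ i, ((A i)ᵀ * (V * X' * Vᵀ)).trace = b i}
      {X : Matrix (Fin n) (Fin n) ℝ |
        X.PosSemidef ∧ ∀ i, ((A i)ᵀ * X).trace = b i} ∧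
    (∀ X' : Matrix (Fin r) (Fin r) ℝ,
      (Cᵀ * (V * X' * Vᵀ)).trace = ((Vᵀ * C * V)ᵀ * X').trace) ∧
    sInf ((fun X : Matrix (Fin n) (Fin n) ℝ => (Cᵀ * X).trace) ''
        {X : Matrix (Fin n) (Fin n) ℝ |
          X.PosSemidef ∧ ∀ i, ((A i)ᵀ * X).trace = b i}) =
      sInf ((fun X' : Matrix (Fin r) (Fin r) ℝ => ((Vᵀ * C * V)ᵀ * X').trace) ''
        {X' : Matrix (Fin r) (Fin r) ℝ |
          X'.PosSemidef ∧ ∀ i, ((A i)ᵀ * (V * X' * Vᵀ)).trace = b i}) := by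
  set W := ∑ i, y i • A i
  have hproj : ∀ X : Matrix (Fin n) (Fin n) ℝ, X.PosSemidef →
      X ∈ {X | ∀ i, ((A i)ᵀ * X).trace = b i} → V * Vᵀ * X = X := by
    rintro X hX (hfeas : ∀ i, _)
    have htrace : (W * X).trace = 0 := by
      rw [← hW.isHermitian.eq, conjTranspose_eq_transpose_of_trivial,
        trace_transpose_sum_smul_mul]
      simp only [hfeas, mul_comm (y _)]
      exact hby
    refine mul_transpose_mul_eq_self_of_range_le hVortho ?_
    rw [hVspan]
    exact range_mulVecLin_le_ker_of_mul_eq_zero (hW.mul_eq_zero_of_trace_mul_eq_zero hX htrace)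
  have hbij := bijOn_conj_of_mul_transpose_mul_eq_self hVortho hproj
  simp only [Set.mem_ofPred_eq] at hbij
  refine ⟨hbij, trace_transpose_mul_conj C V, ?_⟩
  rw [← hbij.image_eq, ← Set.image_comp]
  exact congrArg sInf (Set.image_congr fun X' _ => trace_transpose_mul_conj C V X')

/-- Correctness of one facial reduction step: with
`W := Σᵢ yᵢ Aᵢ ⪰ 0` and `Σᵢ bᵢ yᵢ = 0`, `r = dim ker W`, and `V ∈ ℝ^{n×r}` whose
columns form an orthonormal basis of `ker W`, the map `X' ↦ V X' Vᵀ` is a bijection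
from the feasible set of the reduced SDP onto the feasible set of the original SDP,
it preserves the objective (`C • (V X' Vᵀ) = (VᵀCV) • X'`), and the two problems have
equal optimal values. -/
theorem facial_reduction_step_correct (n r m : ℕ)
    (C : Matrix (Fin n) (Fin n) ℝ) (hC : C.IsSymm)
    (A : Fin m → Matrix (Fin n) (Fin n) ℝ) (hA : ∀ i, (A i).IsSymm)
    (b : Fin m → ℝ) (y : Fin m → ℝ)
    (hW : (∑ i, y i • A i).PosSemidef)
    (hby : ∑ i, b i * y i = 0)
    (hr : r = Module.finrank ℝ (LinearMap.ker (∑ i, y i • A i).mulVecLin))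
    (V : Matrix (Fin n) (Fin r) ℝ)
    (hVortho : Vᵀ * V = 1)
    (hVspan : LinearMap.range V.mulVecLin =
      LinearMap.ker (∑ i, y i • A i).mulVecLin) :
    Set.BijOn (fun X' : Matrix (Fin r) (Fin r) ℝ => V * X' * Vᵀ)
      {X' : Matrix (Fin r) (Fin r) ℝ |
        X'.PosSemidef ∧ ∀ i, ((A i)ᵀ * (V * X' * Vᵀ)).trace = b i}
      {X : Matrix (Fin n) (Fin n) ℝ |
        X.PosSemidef ∧ ∀ i, ((A i)ᵀ * X).trace = b i} ∧
    (∀ X' : Matrix (Fin r) (Fin r) ℝ,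
      (Cᵀ * (V * X' * Vᵀ)).trace = ((Vᵀ * C * V)ᵀ * X').trace) ∧
    sInf ((fun X : Matrix (Fin n) (Fin n) ℝ => (Cᵀ * X).trace) ''
        {X : Matrix (Fin n) (Fin n) ℝ |
          X.PosSemidef ∧ ∀ i, ((A i)ᵀ * X).trace = b i}) =
      sInf ((fun X' : Matrix (Fin r) (Fin r) ℝ => ((Vᵀ * C * V)ᵀ * X').trace) ''
        {X' : Matrix (Fin r) (Fin r) ℝ |
          X'.PosSemidef ∧ ∀ i, ((A i)ᵀ * (V * X' * Vᵀ)).trace = b i}) :=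
  facial_reduction_step_correct_general n r m C A b y hW hby V hVortho hVspan
end

section
/- (Strong duality under Slater's condition.) Let C, A₁, …, A_m ∈ S^n and b ∈ ℝ^m. Suppose the primal SDP min{C • X : Aᵢ • X = bᵢ for i = 1,…,m, X ⪰ 0} admits a strictly feasible point (a positive definite feasible X) and its optimal value is finite (bounded below). Then the dual SDP max{Σᵢ bᵢ yᵢ : y ∈ ℝ^m, C − Σᵢ yᵢ Aᵢ ⪰ 0} attains its optimum, and its optimal value equals the optimal value of the primal. -/
/-!
Let `p` be the primal value and `M = {((Aᵢ • X)ᵢ, t) : X ⪰ 0, C • X ≤ t} ⊆ ℝᵐ × ℝ`, a convex set.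
No feasible `X` has cost below `p`, so `(b, p)` is not an interior point of `M` and a closed
hyperplane separates it from `M`. A positive definite feasible `X₀` lies in the interior of the
PSD cone of `Sⁿ`, so the points `(b, t)` with `t` large are interior points of `M`; hence the
hyperplane is not vertical, and after normalisation it reads
`p ≤ C • X - Σᵢ yᵢ (Aᵢ • X - bᵢ)` for all `X ⪰ 0`. As the PSD cone is a cone, this says both
`C - Σᵢ yᵢ Aᵢ ⪰ 0` and `p ≤ bᵀy`, and weak duality gives `bᵀy' ≤ p` for every dual feasible `y'`.
-/

open Matrix Filter Set Topology

section Separation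

variable {E : Type*} [AddCommGroup E] [Module ℝ E] [TopologicalSpace E] [IsTopologicalAddGroup E]
  [ContinuousSMul ℝ E]

theorem Convex.exists_strongDual_of_notMem_interior {s : Set E} (hs : Convex ℝ s)
    (hs' : (interior s).Nonempty) {x : E} (hx : x ∉ interior s) :
    ∃ g : StrongDual ℝ E, (∀ a ∈ interior s, g a < g x) ∧ ∀ a ∈ s, g a ≤ g x := by
  obtain ⟨g, hg⟩ := geometric_hahn_banach_open_point hs.interior isOpen_interior hx
  refine ⟨g, hg, fun a ha ↦ ?_⟩
  have hcl : a ∈ closure (interior s) :=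
    hs.closure_interior_eq_closure_of_nonempty_interior hs' ▸ subset_closure ha
  exact closure_minimal (fun a ha ↦ (hg a ha).le) (isClosed_le g.continuous continuous_const) hcl

end Separation

section LagrangeMultiplier

variable {E F : Type*} [AddCommGroup E] [Module ℝ E] [NormedAddCommGroup F] [NormedSpace ℝ F]

theorem ConvexOn.exists_lagrange_multiplier_of_eventually {K : Set E} {f : E → ℝ}
    (hf : ConvexOn ℝ K f) (L : E →ₗ[ℝ] F) {b : F} {p t₀ : ℝ}
    (hslater : ∀ᶠ u in 𝓝 b, ∃ x ∈ K, L x = u ∧ f x ≤ t₀)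
    (hp : ∀ x ∈ K, L x = b → p ≤ f x) :
    ∃ y : StrongDual ℝ F, ∀ x ∈ K, p ≤ f x - y (L x - b) := by
  set M : Set (F × ℝ) := {q | ∃ x ∈ K, L x = q.1 ∧ f x ≤ q.2}
  have hM : Convex ℝ M := by
    rintro ⟨u₁, t₁⟩ ⟨x₁, hx₁, hu₁, hf₁⟩ ⟨u₂, t₂⟩ ⟨x₂, hx₂, hu₂, hf₂⟩ a c ha hc hac
    refine ⟨a • x₁ + c • x₂, hf.1 hx₁ hx₂ ha hc hac, by simp_all, ?_⟩
    calc f (a • x₁ + c • x₂) ≤ a • f x₁ + c • f x₂ := hf.2 hx₁ hx₂ ha hc hac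
      _ ≤ _ := by simp only [smul_eq_mul, Prod.snd_add, Prod.smul_snd]; gcongr
  have hint : ∀ t > t₀, (b, t) ∈ interior M := fun t ht ↦ by
    refine mem_interior_iff_mem_nhds.2 <|
      mem_of_superset (prod_mem_nhds hslater (Ioi_mem_nhds ht)) ?_
    rintro ⟨u, s⟩ ⟨⟨x, hxK, hx, hfx⟩, hs⟩
    exact ⟨x, hxK, hx, hfx.trans (le_of_lt hs)⟩
  have hbp : (b, p) ∉ interior M := fun h ↦ by
    have hnear : ∀ᶠ t in 𝓝 p, (b, t) ∈ M :=
      (continuous_const.prodMk continuous_id).continuousAt.preimage_mem_nhds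
        (mem_interior_iff_mem_nhds.1 h)
    obtain ⟨t, ht, x, hxK, hx, hfx⟩ := hnear.exists_lt
    linarith [hp x hxK hx]
  obtain ⟨g, hg_int, hg⟩ := hM.exists_strongDual_of_notMem_interior
    ⟨_, hint (t₀ + 1) (lt_add_one t₀)⟩ hbp
  have hsplit : ∀ u t, g (u, t) = g (u, 0) + t * g (0, 1) := fun u t ↦ by
    rw [← smul_eq_mul, ← map_smul, ← map_add]; simp
  -- `(b, t)` is interior for every `t > max t₀ p`, so the hyperplane is not vertical.
  have hμ : g (0, 1) < 0 := by
    have h := hg_int _ (hint (max t₀ p + 1) (by linarith [le_max_left t₀ p]))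
    rw [hsplit, hsplit b p] at h
    nlinarith [le_max_right t₀ p]
  refine ⟨(-g (0, 1))⁻¹ • g.comp (ContinuousLinearMap.inl ℝ F ℝ), fun x hx ↦ ?_⟩
  have h := hg (L x, f x) ⟨x, hx, rfl, le_rfl⟩
  rw [hsplit, hsplit b p] at h
  have hsub : g (L x - b, 0) = g (L x, 0) - g (b, 0) := by rw [← map_sub, Prod.mk_sub_mk, sub_zero]
  have hsep : g (L x - b, 0) ≤ -g (0, 1) * (f x - p) := by rw [hsub]; linarith
  have hnormal := (inv_mul_le_iff₀ (neg_pos.2 hμ)).2 hsep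
  simp only [_root_.smul_apply, ContinuousLinearMap.comp_apply,
    ContinuousLinearMap.inl_apply, smul_eq_mul]
  linarith

variable [TopologicalSpace E] [IsTopologicalAddGroup E] [ContinuousSMul ℝ E] [FiniteDimensional ℝ F]

theorem ConvexOn.exists_lagrange_multiplier {K : Set E} {f : E → ℝ} (hf : ConvexOn ℝ K f)
    {L : E →ₗ[ℝ] F} (hL : Function.Surjective L) {x₀ : E} (hK : K ∈ 𝓝 x₀)
    (hfx₀ : ContinuousAt f x₀) {p : ℝ} (hp : ∀ x ∈ K, L x = L x₀ → p ≤ f x) :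
    ∃ y : StrongDual ℝ F, ∀ x ∈ K, p ≤ f x - y (L x - L x₀) := by
  refine hf.exists_lagrange_multiplier_of_eventually L (t₀ := f x₀ + 1) ?_ hp
  have hU : K ∩ {x | f x ≤ f x₀ + 1} ∈ 𝓝 x₀ :=
    inter_mem hK (hfx₀.eventually (Iic_mem_nhds (lt_add_one _)))
  filter_upwards [(L.isOpenMap_of_finiteDimensional hL).image_mem_nhds hU]
  rintro _ ⟨x, ⟨hxK, hfx⟩, rfl⟩
  exact ⟨x, hxK, rfl, hfx⟩

end LagrangeMultiplier

namespace Matrix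

variable {m n κ : Type*} [Fintype m] [Fintype n] [Fintype κ]

def frobeniusInner {R : Type*} [CommSemiring R] (M : Matrix m n R) : Matrix m n R →ₗ[R] R where
  toFun X := (Mᵀ * X).trace
  map_add' X Y := by simp [Matrix.mul_add]
  map_smul' c X := by simp

@[simp]
theorem frobeniusInner_apply {R : Type*} [CommSemiring R] (M X : Matrix m n R) :
    M.frobeniusInner X = (Mᵀ * X).trace := rfl

theorem trace_transpose_mul_vecMulVec (M : Matrix n n ℝ) (v : n → ℝ) :
    (Mᵀ * vecMulVec v v).trace = v ⬝ᵥ (M *ᵥ v) := by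
  simp only [trace, diag_apply, mul_apply, transpose_apply, vecMulVec_apply, dotProduct,
    mulVec, Finset.mul_sum]
  rw [Finset.sum_comm]
  exact Finset.sum_congr rfl fun i _ ↦ Finset.sum_congr rfl fun j _ ↦ by ring

theorem trace_transpose_sub_sum_smul_mul (C : Matrix m n ℝ) (A : κ → Matrix m n ℝ)
    (y : κ → ℝ) (X : Matrix m n ℝ) :
    ((C - ∑ i, y i • A i)ᵀ * X).trace = (Cᵀ * X).trace - ∑ i, y i * ((A i)ᵀ * X).trace := by
  simp only [transpose_sub, transpose_sum, transpose_smul, Matrix.sub_mul, Matrix.sum_mul,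
    Matrix.smul_mul, trace_sub, trace_sum, trace_smul, smul_eq_mul]

theorem posSemidef_of_forall_le_trace_transpose_mul {Z : Matrix n n ℝ} (hZ : Z.IsSymm)
    {β : ℝ} (h : ∀ X : Matrix n n ℝ, X.PosSemidef → β ≤ (Zᵀ * X).trace) : Z.PosSemidef := by
  refine posSemidef_iff_dotProduct_mulVec.2 ⟨hZ, fun v ↦ ?_⟩
  have hray : ∀ s > 0, β ≤ s * (v ⬝ᵥ (Z *ᵥ v)) := fun s hs ↦ by
    simpa [trace_transpose_mul_vecMulVec] using h _ ((posSemidef_vecMulVec_self_star v).smul hs.le)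
  exact le_of_tendsto (tendsto_const_nhds.div_atTop tendsto_id)
    ((eventually_gt_atTop 0).mono fun s hs ↦ (div_le_iff₀' hs).2 (hray s hs))

section PositiveCone

open scoped MatrixOrder Matrix.Norms.L2Operator

theorem PosDef.eventually_posSemidef {X₀ : Matrix n n ℝ} (hX₀ : X₀.PosDef) :
    ∀ᶠ X in 𝓝 X₀, X.IsHermitian → X.PosSemidef := by
  classical
  cases subsingleton_or_nontrivial (Matrix n n ℝ)
  · exact .of_forall fun X _ ↦ Subsingleton.elim 0 X ▸ .zero
  obtain ⟨r, hr, hrX₀⟩ : ∃ r > 0, algebraMap ℝ (Matrix n n ℝ) r ≤ X₀ := by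
    have hpos : IsStrictlyPositive X₀ := isStrictlyPositive_iff_posDef.mpr hX₀
    exact (CFC.exists_pos_algebraMap_le_iff hpos.isSelfAdjoint).2 fun _ ↦ hpos.spectrum_pos
  filter_upwards [Metric.ball_mem_nhds X₀ hr] with X hX hXh
  have hsa : IsSelfAdjoint (X - X₀) := (hXh.sub hX₀.isHermitian).isSelfAdjoint
  have hΔ : algebraMap ℝ (Matrix n n ℝ) (-‖X - X₀‖) ≤ X - X₀ :=
    (algebraMap_le_iff_le_spectrum hsa).2 fun x hx ↦
      neg_le_of_abs_le (IsometricContinuousFunctionalCalculus.norm_spectrum_le (X - X₀) hx hsa)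
  refine nonneg_iff_posSemidef.mp ?_
  calc 0 ≤ algebraMap ℝ (Matrix n n ℝ) (r + -‖X - X₀‖) := by
        rw [Algebra.algebraMap_eq_smul_one]
        exact smul_nonneg (by rw [← dist_eq_norm]; linarith [Metric.mem_ball.mp hX]) zero_le_one
    _ ≤ X₀ + (X - X₀) := by rw [map_add]; exact add_le_add hrX₀ hΔ
    _ = X := add_sub_cancel X₀ X

theorem PosSemidef.trace_mul_nonneg {A B : Matrix n n ℝ} (hA : A.PosSemidef)
    (hB : B.PosSemidef) : 0 ≤ (A * B).trace := by
  classical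
  obtain ⟨S, rfl⟩ := CStarAlgebra.nonneg_iff_eq_star_mul_self.mp hB.nonneg
  rw [← Matrix.mul_assoc, trace_mul_comm, ← Matrix.mul_assoc]
  exact (hA.mul_mul_conjTranspose_same S).trace_nonneg

end PositiveCone

end Matrix

section SDP

variable {n κ : Type*} [Fintype n] [Fintype κ]

theorem sdp_weak_duality {C X : Matrix n n ℝ} {A : κ → Matrix n n ℝ} {b y : κ → ℝ}
    (hy : (C - ∑ i, y i • A i).PosSemidef) (hX : X.PosSemidef)
    (hXb : ∀ i, ((A i)ᵀ * X).trace = b i) :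
    ∑ i, b i * y i ≤ (Cᵀ * X).trace := by
  have h := hy.transpose.trace_mul_nonneg hX
  rw [trace_transpose_sub_sum_smul_mul] at h
  simp only [hXb, mul_comm (y _)] at h
  linarith

theorem exists_sdp_lagrange_multiplier (C : Matrix n n ℝ) (A : κ → Matrix n n ℝ) {b : κ → ℝ}
    {X₀ : Matrix n n ℝ} (hX₀ : X₀.PosDef) (hX₀b : ∀ i, ((A i)ᵀ * X₀).trace = b i) {p : ℝ}
    (hp : ∀ X : Matrix n n ℝ, X.PosSemidef → (∀ i, ((A i)ᵀ * X).trace = b i) →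
      p ≤ (Cᵀ * X).trace) :
    ∃ y : κ → ℝ, ∀ X : Matrix n n ℝ, X.PosSemidef →
      p - ∑ i, b i * y i ≤ ((C - ∑ i, y i • A i)ᵀ * X).trace := by
  -- The PSD cone has interior points only inside `Sⁿ`, and the image of `Sⁿ` under the
  -- constraint map may be a proper subspace of `κ → ℝ`: the multiplier is found on that range
  -- and extended by Hahn–Banach.
  let S := selfAdjoint.submodule ℝ (Matrix n n ℝ)
  let L : S →ₗ[ℝ] κ → ℝ := LinearMap.pi (fun i ↦ (A i).frobeniusInner) ∘ₗ S.subtype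
  let cost : S →ₗ[ℝ] ℝ := C.frobeniusInner ∘ₗ S.subtype
  let K : Set S := {X | (X : Matrix n n ℝ).PosSemidef}
  have hK : Convex ℝ K := fun X hX Y hY a c ha hc _ ↦ (hX.smul ha).add (hY.smul hc)
  let X₀' : S := ⟨X₀, hX₀.isHermitian⟩
  have hKX₀ : K ∈ 𝓝 X₀' := by
    filter_upwards [continuous_subtype_val.continuousAt.eventually hX₀.eventually_posSemidef]
      with X hX using hX X.2
  have hp' : ∀ X ∈ K, L.rangeRestrict X = L.rangeRestrict X₀' → p ≤ cost X := by
    intro X hX hXL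
    refine hp X hX fun i ↦ ?_
    simpa [L, X₀', hX₀b] using congr_arg (fun w : LinearMap.range L ↦ (w : κ → ℝ) i) hXL
  obtain ⟨g, hg⟩ := (cost.convexOn hK).exists_lagrange_multiplier L.surjective_rangeRestrict hKX₀
    cost.continuous_of_finiteDimensional.continuousAt hp'
  obtain ⟨g', hg', -⟩ := exists_extension_norm_eq (LinearMap.range L) g
  classical
  have hg'_apply : ∀ v, g' v = ∑ i, v i * g' (Pi.single i 1) := fun v ↦ by
    refine (g'.toLinearMap.pi_apply_eq_sum_univ v).trans (Finset.sum_congr rfl fun i _ ↦ ?_)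
    simp only [smul_eq_mul, ContinuousLinearMap.coe_coe]
    congr 2
    ext j
    simp [Pi.single_apply, eq_comm]
  refine ⟨fun i ↦ g' (Pi.single i 1), fun X hX ↦ ?_⟩
  have h := hg ⟨X, hX.isHermitian⟩ hX
  rw [← map_sub, ← hg', hg'_apply] at h
  simp only [LinearMap.coe_comp, Submodule.coe_subtype, Function.comp_apply, frobeniusInner_apply,
    map_sub, AddSubgroupClass.coe_sub, LinearMap.codRestrict_apply, Pi.sub_apply,
    LinearMap.pi_apply, hX₀b, sub_mul, Finset.sum_sub_distrib, cost, L, X₀'] at h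
  rw [trace_transpose_sub_sum_smul_mul]
  simp only [mul_comm (g' _)]
  linarith

end SDP

/-- Strong duality under Slater's condition: if the primal SDP
`min {C • X : Aᵢ • X = bᵢ, X ⪰ 0}` has a strictly feasible (positive definite) point
and its objective is bounded below on the feasible set, then the dual SDP
`max {Σᵢ bᵢ yᵢ : C − Σᵢ yᵢ Aᵢ ⪰ 0}` attains its optimum, and its optimal value equals
the optimal value of the primal. -/
theorem sdp_strong_duality (n m : ℕ)
    (C : Matrix (Fin n) (Fin n) ℝ) (hC : C.IsSymm)
    (A : Fin m → Matrix (Fin n) (Fin n) ℝ) (hA : ∀ i, (A i).IsSymm)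
    (b : Fin m → ℝ)
    (hSlater : ∃ X : Matrix (Fin n) (Fin n) ℝ,
      X.PosDef ∧ ∀ i, ((A i)ᵀ * X).trace = b i)
    (hbdd : BddBelow ((fun X : Matrix (Fin n) (Fin n) ℝ => (Cᵀ * X).trace) ''
      {X : Matrix (Fin n) (Fin n) ℝ |
        X.PosSemidef ∧ ∀ i, ((A i)ᵀ * X).trace = b i})) :
    ∃ y : Fin m → ℝ,
      (C - ∑ i, y i • A i).PosSemidef ∧
      (∀ y' : Fin m → ℝ, (C - ∑ i, y' i • A i).PosSemidef →
        ∑ i, b i * y' i ≤ ∑ i, b i * y i) ∧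
      ∑ i, b i * y i =
        sInf ((fun X : Matrix (Fin n) (Fin n) ℝ => (Cᵀ * X).trace) ''
          {X : Matrix (Fin n) (Fin n) ℝ |
            X.PosSemidef ∧ ∀ i, ((A i)ᵀ * X).trace = b i}) := by
  obtain ⟨X₀, hX₀, hX₀b⟩ := hSlater
  set P := (fun X : Matrix (Fin n) (Fin n) ℝ => (Cᵀ * X).trace) ''
    {X | X.PosSemidef ∧ ∀ i, ((A i)ᵀ * X).trace = b i}
  have hP : P.Nonempty := ⟨_, X₀, ⟨hX₀.posSemidef, hX₀b⟩, rfl⟩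
  obtain ⟨y, hy⟩ := exists_sdp_lagrange_multiplier C A hX₀ hX₀b (p := sInf P)
    fun X hX hXb ↦ csInf_le hbdd ⟨X, ⟨hX, hXb⟩, rfl⟩
  have hdual : (C - ∑ i, y i • A i).PosSemidef := by
    refine posSemidef_of_forall_le_trace_transpose_mul ?_ hy
    simp only [IsSymm, transpose_sub, transpose_sum, transpose_smul, hC.eq, (hA _).eq]
  have hweak : ∀ y' : Fin m → ℝ, (C - ∑ i, y' i • A i).PosSemidef → ∑ i, b i * y' i ≤ sInf P :=
    fun y' hy' ↦ le_csInf hP fun _ ⟨X, ⟨hX, hXb⟩, hXP⟩ ↦ hXP ▸ sdp_weak_duality hy' hX hXb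
  have hle : sInf P ≤ ∑ i, b i * y i := by simpa using hy 0 .zero
  exact ⟨y, hdual, fun y' hy' ↦ (hweak y' hy').trans hle, le_antisymm (hweak y hdual) hle⟩
end

section
/- (Positive semidefinite matrix completion over chordal patterns, used to justify the matrix-completion reformulation MC(Q).) Let G = (N, E) be a chordal simple graph on N = {1, …, n} containing all loops implicitly (every diagonal position is specified), and let X be a partial symmetric matrix specified exactly on the diagonal and on positions (i, j) with (i, j) ∈ E. If for every maximal clique C of G the fully specified principal submatrix X[C] is positive semidefinite, then X can be completed to a full n×n positive semidefinite symmetric matrix, i.e., there exists a positive semidefinite X̂ ∈ S^n agreeing with X on the diagonal and on all positions (i, j) ∈ E. -/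
/-!
A chordal graph has a simplicial vertex (one whose neighbourhood is a clique); more precisely, a
clique `K` that misses some vertex misses a simplicial vertex. Pick `a` adjacent to all of `K` but
not to some `b ≠ a`, let `B ∋ b` be a maximal connected set of non-neighbours of `a`, and `T` the
set of neighbours of `a` adjacent to `B`. If `t₁, t₂ ∈ T` were not adjacent, a shortest path from
`t₁` to `t₂` through `B`, closed up through `a`, would be a chordless cycle of length at least 4.
So `T` is a clique, and induction on `G[B ∪ T]` with the clique `T` yields a simplicial vertex in
`B`, which is simplicial in `G` because every neighbour of `B` lies in `B ∪ T`.

For the completion, remove a simplicial vertex `v` and complete the rest to a PSD matrix `Z` by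
induction. As `C = {v} ∪ N(v)` is a clique, `X[C]` is the Gram matrix of vectors `g i`. Projecting
`g v` onto the span of the `g u`, `u ∈ N(v)`, gives weights `w` supported on `N(v)` with
`(Z w) u = X u v` on `N(v)` and `wᵀ Z w ≤ X v v`. Then `Pᵀ Z P + (X v v - wᵀ Z w) e_v e_vᵀ`, with
`P` the identity whose column `v` is replaced by `w`, is PSD, agrees with `Z` away from `v`, and
agrees with `X` on the row and column of `v` inside `C`.
-/

open Matrix

def IsChordalGraph {V : Type*} (G : SimpleGraph V) : Prop :=
  ∀ (v : V) (w : G.Walk v v), w.IsCycle → 4 ≤ w.length →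
    ∃ a b : V, a ∈ w.support ∧ b ∈ w.support ∧ G.Adj a b ∧ s(a, b) ∉ w.edges

namespace SimpleGraph

variable {V W : Type*} {G : SimpleGraph V}

def IsSimplicial (G : SimpleGraph V) (v : V) : Prop :=
  G.IsClique (G.neighborSet v)

namespace Walk

theorem isChordless_of_length_eq_dist {u v : V} {p : G.Walk u v}
    (hp : p.length = G.dist u v) : p.IsChordless := by
  classical
  have hsubwalk : ∀ {x y} (q : G.Walk x y), q.IsSubwalk p → G.Adj x y → s(x, y) ∈ p.edges := by
    intro x y q hq hxy
    have hq1 : q.length = 1 := by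
      rw [length_eq_dist_of_subwalk hp hq, dist_eq_one_iff_adj.mpr hxy]
    refine hq.edges_subset ?_
    rcases q with _ | ⟨_, _ | ⟨_, _⟩⟩ <;> simp_all
  rw [isChordless_iff_forall_mem_edges]
  intro x y hx hy hxy
  rw [← p.take_spec hx, mem_support_append_iff] at hy
  rcases hy with hy | hy
  · rw [Sym2.eq_swap]
    exact hsubwalk _ (((p.takeUntil x hx).isSubwalk_dropUntil hy).trans
      (p.isSubwalk_takeUntil hx)) hxy.symm
  · exact hsubwalk _ (((p.dropUntil x hx).isSubwalk_takeUntil hy).trans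
      (p.isSubwalk_dropUntil hx)) hxy

theorem IsChordless.map {H : SimpleGraph W} (f : H ↪g G) {u v : W} {p : H.Walk u v}
    (hp : p.IsChordless) : (p.map f.toHom).IsChordless := by
  rw [isChordless_iff_forall_mem_edges]
  intro x y hx hy hxy
  rw [support_map, List.mem_map] at hx hy
  obtain ⟨x, hx, rfl⟩ := hx
  obtain ⟨y, hy, rfl⟩ := hy
  rw [edges_map]
  exact List.mem_map_of_mem (hp.mem_edges hx hy (f.map_adj_iff.mp hxy))

variable {a x y : V} {m : G.Walk x y}

theorem IsPath.isCycle_cons_concat (hm : m.IsPath) (ha : a ∉ m.support) (hxy : x ≠ y)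
    (hax : G.Adj a x) (hya : G.Adj y a) : (cons hax (m.concat hya)).IsCycle := by
  refine (cons_isCycle_iff _ _).mpr ⟨hm.concat ha hya, ?_⟩
  rw [edges_concat, List.concat_eq_append, List.mem_append, List.mem_singleton]
  rintro (h | h)
  · exact ha (m.fst_mem_support_of_mem_edges h)
  · simp_all [Sym2.eq_swap]

theorem IsChordless.cons_concat (hm : m.IsChordless)
    (hN : ∀ z ∈ m.support, G.Adj a z → z = x ∨ z = y)
    (hax : G.Adj a x) (hya : G.Adj y a) : (cons hax (m.concat hya)).IsChordless := by
  have hsupp : ∀ z ∈ (cons hax (m.concat hya)).support, z = a ∨ z ∈ m.support := by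
    simp only [support_cons, support_concat, List.mem_cons, List.mem_append]
    tauto
  rw [isChordless_iff_forall_mem_edges]
  intro u v hu hv huv
  rw [edges_cons, edges_concat, List.concat_eq_append, List.mem_cons, List.mem_append,
    List.mem_singleton]
  rcases hsupp u hu with rfl | hum <;> rcases hsupp v hv with rfl | hvm
  · exact (G.irrefl huv).elim
  · rcases hN v hvm huv with rfl | rfl <;> simp
  · rcases hN u hum huv.symm with rfl | rfl <;> simp [Sym2.eq_swap]
  · exact Or.inr (Or.inl (hm.mem_edges hum hvm huv))

end Walk

theorem IsSimplicial.of_induce {s : Set V} {v : s} (hv : (G.induce s).IsSimplicial v)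
    (hN : G.neighborSet v ⊆ s) : G.IsSimplicial v := by
  intro x hx y hy hxy
  exact @hv ⟨x, hN hx⟩ hx ⟨y, hN hy⟩ hy fun h ↦ hxy (congrArg Subtype.val h)

theorem mem_of_adj_of_maximal_connected {D B : Set V}
    (hB : Maximal (fun B ↦ B ⊆ D ∧ (G.induce B).Connected) B) {x y : V} (hx : x ∈ B)
    (hy : y ∈ D) (hxy : G.Adj x y) : y ∈ B := by
  have hBy : B ∪ {y} ⊆ D ∧ (G.induce (B ∪ {y})).Connected :=
    ⟨Set.union_subset hB.prop.1 (Set.singleton_subset_iff.mpr hy),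
      connected_induce_union hB.prop.2.preconnected .of_subsingleton hx rfl hxy⟩
  exact hB.le_of_ge hBy Set.subset_union_left (Set.mem_union_right _ rfl)

theorem IsClique.exists_not_adj_of_ne_top {K : Set V} (hK : G.IsClique K)
    (hG : G ≠ ⊤) : ∃ a b, b ≠ a ∧ ¬G.Adj a b ∧ ∀ k ∈ K, k ≠ a → G.Adj a k := by
  by_cases hKtop : ∃ k ∈ K, ∃ b, b ≠ k ∧ ¬G.Adj k b
  · obtain ⟨k, hk, b, hbk, hkb⟩ := hKtop
    exact ⟨k, b, hbk, hkb, fun k' hk' hne ↦ hK hk hk' hne.symm⟩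
  · push Not at hKtop
    obtain ⟨x, y, hxy, hnxy⟩ : ∃ x y, x ≠ y ∧ ¬G.Adj x y := by
      by_contra! h
      exact hG (SimpleGraph.ext (funext₂ fun x y ↦ propext ⟨G.ne_of_adj, h x y⟩))
    exact ⟨x, y, hxy.symm, hnxy, fun k hk hne ↦ (hKtop k hk x hne.symm).symm⟩

end SimpleGraph

section Chordal

open SimpleGraph

variable {V W : Type*} {G : SimpleGraph V}

theorem IsChordalGraph.of_embedding {H : SimpleGraph W} (f : H ↪g G)
    (hG : IsChordalGraph G) : IsChordalGraph H := by
  intro v c hc hlen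
  obtain ⟨x, y, hx, hy, hxy, hc'⟩ :=
    hG _ (c.map f.toHom) (hc.map f.injective) (by rwa [Walk.length_map])
  rw [Walk.support_map, List.mem_map] at hx hy
  obtain ⟨x, hx, rfl⟩ := hx
  obtain ⟨y, hy, rfl⟩ := hy
  refine ⟨x, y, hx, hy, f.map_adj_iff.mp hxy, fun h ↦ hc' ?_⟩
  rw [Walk.edges_map]
  exact List.mem_map_of_mem h

theorem IsChordalGraph.not_isChordless (hG : IsChordalGraph G) {v : V} {c : G.Walk v v}
    (hc : c.IsCycle) (hlen : 4 ≤ c.length) : ¬c.IsChordless := by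
  obtain ⟨x, y, hx, hy, hxy, hxy'⟩ := hG v c hc hlen
  exact fun h ↦ hxy' (h.mem_edges hx hy hxy)

theorem IsChordalGraph.isClique_neighborSet_adj_of_preconnected (hG : IsChordalGraph G) {a : V}
    {B : Set V} (hB : (G.induce B).Preconnected) (haB : ∀ x ∈ B, x ≠ a ∧ ¬G.Adj a x) :
    G.IsClique {t | G.Adj a t ∧ ∃ x ∈ B, G.Adj t x} := by
  rintro t₁ ⟨hat₁, x₁, hx₁, htx₁⟩ t₂ ⟨hat₂, x₂, hx₂, htx₂⟩ hne
  by_contra hnadj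
  set S : Set V := B ∪ {t₁} ∪ {t₂}
  have hS : (G.induce S).Connected :=
    connected_induce_union
      (connected_induce_union hB .of_subsingleton hx₁ (Set.mem_singleton t₁)
        htx₁.symm).preconnected
      .of_subsingleton (Or.inl hx₂) (Set.mem_singleton t₂) htx₂.symm
  have hreach := hS.preconnected ⟨t₁, by simp [S]⟩ ⟨t₂, by simp [S]⟩
  obtain ⟨q, hq⟩ := hreach.exists_walk_length_eq_dist
  have hq2 : 2 ≤ q.length :=
    hq ▸ hreach.one_lt_dist_of_ne_of_not_adj (by simpa using hne) (by simpa using hnadj)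
  let m : G.Walk t₁ t₂ := q.map (Embedding.induce S).toHom
  have hmpath : m.IsPath :=
    (q.isPath_of_length_eq_dist hq).map (Embedding.induce (G := G) S).injective
  have hmchordless : m.IsChordless := (q.isChordless_of_length_eq_dist hq).map _
  have hmlen : m.length = q.length := Walk.length_map _ _
  have hmS : ∀ z ∈ m.support, z ∈ S := by
    intro z hz
    obtain ⟨z, -, rfl⟩ := List.mem_map.mp (Walk.support_map _ q ▸ hz)
    exact z.2
  have haS : a ∉ S := by
    rintro ((h | rfl) | rfl)
    · exact (haB a h).1 rfl
    · exact G.irrefl hat₁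
    · exact G.irrefl hat₂
  refine hG.not_isChordless
    (hmpath.isCycle_cons_concat (fun h ↦ haS (hmS a h)) hne hat₁ hat₂.symm)
    (by rw [Walk.length_cons, Walk.length_concat]; omega)
    (hmchordless.cons_concat ?_ hat₁ hat₂.symm)
  intro z hz haz
  rcases hmS z hz with (h | rfl) | rfl
  · exact absurd haz (haB z h).2
  · exact Or.inl rfl
  · exact Or.inr rfl

theorem IsChordalGraph.exists_isSimplicial_notMem [Finite V] (hG : IsChordalGraph G)
    {K : Set V} (hK : G.IsClique K) {z : V} (hz : z ∉ K) : ∃ u ∉ K, G.IsSimplicial u := by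
  induction hn : Nat.card V using Nat.strong_induction_on generalizing V with
  | _ n ih =>
  subst hn
  by_cases htop : G = ⊤
  · subst htop
    exact ⟨z, hz, fun x _ y _ hxy ↦ hxy⟩
  obtain ⟨a, b, hba, hab, hKa⟩ := hK.exists_not_adj_of_ne_top htop
  obtain ⟨B, hbB', hB⟩ := Finite.exists_le_maximal
    (p := fun B : Set V ↦ B ⊆ {x | x ≠ a ∧ ¬G.Adj a x} ∧ (G.induce B).Connected)
    (a := {b})
    ⟨Set.singleton_subset_iff.mpr ⟨hba, hab⟩, ⟨.of_subsingleton⟩⟩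
  have hbB : b ∈ B := hbB' rfl
  set T := {t | G.Adj a t ∧ ∃ x ∈ B, G.Adj t x}
  have hT : G.IsClique T :=
    hG.isClique_neighborSet_adj_of_preconnected hB.prop.2.preconnected hB.prop.1
  have hBT : ∀ x ∈ B, G.neighborSet x ⊆ B ∪ T := by
    intro x hx y hxy
    by_cases hay : G.Adj a y
    · exact Or.inr ⟨hay, x, hx, G.adj_symm hxy⟩
    · refine Or.inl (mem_of_adj_of_maximal_connected hB hx ⟨?_, hay⟩ hxy)
      rintro rfl
      exact (hB.prop.1 hx).2 (G.adj_symm hxy)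
  have haBT : a ∉ B ∪ T := by
    rintro (h | h)
    · exact (hB.prop.1 h).1 rfl
    · exact G.irrefl h.1
  obtain ⟨⟨u, huBT⟩, huT, hu⟩ := ih _ (Finite.card_subtype_lt haBT)
    (hG.of_embedding (Embedding.induce (B ∪ T))) (K := Subtype.val ⁻¹' T)
    (fun x hx y hy hxy ↦ @hT x hx y hy (Subtype.coe_ne_coe.mpr hxy)) (z := ⟨b, Or.inl hbB⟩)
    (fun h ↦ (hB.prop.1 hbB).2 h.1) rfl
  have huB : u ∈ B := huBT.resolve_right huT
  refine ⟨u, fun huK ↦ ?_, hu.of_induce (hBT u huB)⟩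
  obtain ⟨hua, hau⟩ := hB.prop.1 huB
  exact hau (hKa u huK hua)

theorem IsChordalGraph.exists_isSimplicial [Finite V] [Nonempty V] (hG : IsChordalGraph G) :
    ∃ u, G.IsSimplicial u :=
  let ⟨u, _, hu⟩ := hG.exists_isSimplicial_notMem isClique_empty
    (Set.notMem_empty (Classical.arbitrary V))
  ⟨u, hu⟩

end Chordal

section PosSemidef

variable {n : Type*} [Fintype n] [DecidableEq n]

open scoped ComplexOrder in
theorem Matrix.PosSemidef.exists_eq_gram {𝕜 : Type*} [RCLike 𝕜] {M : Matrix n n 𝕜}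
    (hM : M.PosSemidef) : ∃ g : n → EuclideanSpace 𝕜 n, M = gram 𝕜 g := by
  open scoped MatrixOrder in
  obtain ⟨B, rfl⟩ := CStarAlgebra.nonneg_iff_eq_star_mul_self.mp hM.nonneg
  refine ⟨fun i ↦ WithLp.toLp 2 (fun k ↦ B k i), ?_⟩
  ext i j
  simp [mul_apply, PiLp.inner_apply, mul_comm]

theorem exists_supported_sum_smul_inner_eq_and_norm_le {ι E : Type*} [Fintype ι]
    [NormedAddCommGroup E] [InnerProductSpace ℝ E] (g : ι → E) (S : Set ι) (v : ι) :
    ∃ w : ι → ℝ, (∀ k ∉ S, w k = 0) ∧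
      (∀ u ∈ S, inner ℝ (g u) (∑ k, w k • g k) = inner ℝ (g u) (g v)) ∧
      ‖∑ k, w k • g k‖ ≤ ‖g v‖ := by
  set K := Submodule.span ℝ (g '' S)
  have : FiniteDimensional ℝ K := FiniteDimensional.span_of_finite ℝ (S.toFinite.image g)
  obtain ⟨l, hl, hlp⟩ :=
    (Finsupp.mem_span_image_iff_linearCombination ℝ).mp (K.starProjection_apply_mem (g v))
  rw [Finsupp.linearCombination_apply, Finsupp.sum_fintype _ _ (by simp)] at hlp
  refine ⟨l, fun k hk ↦ Finsupp.notMem_support_iff.mp fun h ↦ hk (hl h), fun u hu ↦ ?_,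
    hlp ▸ K.norm_starProjection_apply_le _⟩
  have := K.starProjection_inner_eq_zero (g v) (g u) (Submodule.subset_span ⟨u, hu, rfl⟩)
  rw [inner_sub_left, sub_eq_zero] at this
  rw [hlp, real_inner_comm, ← this, real_inner_comm]

theorem Matrix.PosSemidef.exists_extension {Z : Matrix n n ℝ} (hZ : Z.PosSemidef) (v : n)
    (w : n → ℝ) {c : ℝ} (hc : w ⬝ᵥ Z *ᵥ w ≤ c) :
    ∃ Y : Matrix n n ℝ, Y.PosSemidef ∧ (∀ i j, i ≠ v → j ≠ v → Y i j = Z i j) ∧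
      (∀ i, i ≠ v → Y i v = (Z *ᵥ w) i ∧ Y v i = (Z *ᵥ w) i) ∧ Y v v = c := by
  set P := updateCol (1 : Matrix n n ℝ) v w
  have hY : (Pᴴ * Z * P + single v v (c - w ⬝ᵥ Z *ᵥ w)).PosSemidef :=
    (hZ.conjTranspose_mul_mul_same P).add <| by
      rw [← diagonal_single]
      exact .diagonal (Pi.single_nonneg.mpr (sub_nonneg.mpr hc))
  have hZs : ∀ i j, Z j i = Z i j := fun i j ↦ by simpa using hZ.1.apply i j
  refine ⟨_, hY, fun i j hi hj ↦ ?_, fun i hi ↦ ⟨?_, ?_⟩, ?_⟩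
  · simp [P, mul_apply, one_apply, updateCol_ne hi, hi.symm, hj]
  · simp [P, mul_apply, one_apply, updateCol_ne hi, hi.symm, mulVec, dotProduct]
  · simp [P, mul_apply, one_apply, updateCol_ne hi, hi.symm, mulVec, dotProduct, hZs i,
      mul_comm]
  · simp [P, mul_apply]
    rw [dotProduct_mulVec]
    simp [vecMul, dotProduct]

theorem Matrix.PosSemidef.exists_glue {Z X : Matrix n n ℝ} (hZ : Z.PosSemidef) {C : Finset n}
    {v : n} (hv : v ∈ C) (hXC : (X.submatrix ((↑) : C → n) (↑)).PosSemidef)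
    (hZX : ∀ i ∈ C, ∀ j ∈ C, i ≠ v → j ≠ v → Z i j = X i j) :
    ∃ Y : Matrix n n ℝ, Y.PosSemidef ∧ (∀ i j, i ≠ v → j ≠ v → Y i j = Z i j) ∧
      ∀ i ∈ C, Y i v = X i v ∧ Y v i = X v i := by
  obtain ⟨g₀, hg₀⟩ := hXC.exists_eq_gram
  let g : n → EuclideanSpace ℝ C := fun i ↦ if h : i ∈ C then g₀ ⟨i, h⟩ else 0
  have hg : ∀ i ∈ C, ∀ j ∈ C, inner ℝ (g i) (g j) = X i j := fun i hi j hj ↦ by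
    simpa [g, hi, hj] using (congrFun₂ hg₀ ⟨i, hi⟩ ⟨j, hj⟩).symm
  obtain ⟨w, hwS, hw, hwle⟩ :=
    exists_supported_sum_smul_inner_eq_and_norm_le g {i | i ∈ C ∧ i ≠ v} v
  set p := ∑ k, w k • g k
  have hZw : ∀ u ∈ C, u ≠ v → (Z *ᵥ w) u = inner ℝ (g u) p := by
    intro u hu huv
    simp only [mulVec, dotProduct, p, inner_sum, real_inner_smul_right]
    refine Finset.sum_congr rfl fun k _ ↦ ?_
    by_cases hk : k ∈ C ∧ k ≠ v
    · rw [hZX u hu k hk.1 huv hk.2, hg u hu k hk.1, mul_comm]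
    · simp [hwS k hk]
  have hwZw : w ⬝ᵥ Z *ᵥ w ≤ X v v := by
    have hnorm : w ⬝ᵥ Z *ᵥ w = ‖p‖ ^ 2 := by
      rw [← real_inner_self_eq_norm_sq]
      simp only [dotProduct, p, sum_inner, real_inner_smul_left]
      refine Finset.sum_congr rfl fun k _ ↦ ?_
      by_cases hk : k ∈ C ∧ k ≠ v
      · rw [hZw k hk.1 hk.2]
      · simp [hwS k hk]
    rw [hnorm, ← hg v hv v hv, real_inner_self_eq_norm_sq]
    gcongr
  obtain ⟨Y, hY, hYZ, hYv, hYvv⟩ := hZ.exists_extension v w hwZw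
  refine ⟨Y, hY, hYZ, fun i hi ↦ ?_⟩
  by_cases hiv : i = v
  · subst hiv
    exact ⟨hYvv, hYvv⟩
  have hZwi : (Z *ᵥ w) i = X i v := by rw [hZw i hi hiv, hw i ⟨hi, hiv⟩, hg i hi v hv]
  refine ⟨(hYv i hiv).1.trans hZwi, (hYv i hiv).2.trans (hZwi.trans ?_)⟩
  rw [← hg i hi v hv, ← hg v hv i hi, real_inner_comm]

end PosSemidef

section Completion

open SimpleGraph

variable {V : Type*} [Fintype V] {G : SimpleGraph V}

theorem IsChordalGraph.exists_posSemidef_completion_on (hG : IsChordalGraph G)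
    {X : Matrix V V ℝ}
    (hX : ∀ C : Finset V, G.IsClique (C : Set V) →
      (X.submatrix ((↑) : C → V) (↑)).PosSemidef)
    (s : Finset V) :
    ∃ Y : Matrix V V ℝ, Y.PosSemidef ∧ (∀ i ∈ s, Y i i = X i i) ∧
      ∀ i ∈ s, ∀ j ∈ s, G.Adj i j → Y i j = X i j := by
  classical
  induction s using Finset.strongInduction with
  | H s ih =>
  rcases s.eq_empty_or_nonempty with rfl | hs
  · exact ⟨0, .zero, by simp, by simp⟩
  have : Nonempty s := hs.to_subtype
  obtain ⟨⟨v, hv⟩, hsimp⟩ :=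
    (hG.of_embedding (Embedding.induce (s : Set V))).exists_isSimplicial
  set C := insert v (s.filter (G.Adj v))
  have hC : G.IsClique (C : Set V) := by
    rw [Finset.coe_insert, isClique_insert]
    refine ⟨fun x hx y hy hxy ↦ ?_, fun x hx _ ↦ (Finset.mem_filter.mp hx).2⟩
    rw [Finset.coe_filter, Set.mem_ofPred_eq] at hx hy
    exact @hsimp ⟨x, hx.1⟩ hx.2 ⟨y, hy.1⟩ hy.2 fun h ↦ hxy (congrArg Subtype.val h)
  obtain ⟨Z, hZ, hZdiag, hZadj⟩ := ih (s.erase v) (Finset.erase_ssubset hv)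
  have hCs : ∀ i ∈ C, i ≠ v → i ∈ s.erase v := fun i hi hiv ↦ Finset.mem_erase.mpr
    ⟨hiv, (Finset.mem_filter.mp ((Finset.mem_insert.mp hi).resolve_left hiv)).1⟩
  have hZX : ∀ i ∈ C, ∀ j ∈ C, i ≠ v → j ≠ v → Z i j = X i j := by
    intro i hi j hj hiv hjv
    rcases eq_or_ne i j with rfl | hij
    · exact hZdiag i (hCs i hi hiv)
    · exact hZadj i (hCs i hi hiv) j (hCs j hj hjv) (hC hi hj hij)
  obtain ⟨Y, hY, hYZ, hYC⟩ := hZ.exists_glue (Finset.mem_insert_self v _) (hX C hC) hZX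
  refine ⟨Y, hY, fun i hi ↦ ?_, fun i hi j hj hij ↦ ?_⟩
  · rcases eq_or_ne i v with rfl | hiv
    · exact (hYC i (Finset.mem_insert_self i _)).1
    · rw [hYZ i i hiv hiv, hZdiag i (Finset.mem_erase.mpr ⟨hiv, hi⟩)]
  · rcases eq_or_ne i v with rfl | hiv
    · exact (hYC j (Finset.mem_insert_of_mem (Finset.mem_filter.mpr ⟨hj, hij⟩))).2
    rcases eq_or_ne j v with rfl | hjv
    · exact (hYC i (Finset.mem_insert_of_mem (Finset.mem_filter.mpr ⟨hi, hij.symm⟩))).1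
    rw [hYZ i j hiv hjv]
    exact hZadj i (Finset.mem_erase.mpr ⟨hiv, hi⟩) j (Finset.mem_erase.mpr ⟨hjv, hj⟩) hij

end Completion

theorem chordal_psd_completion_general (n : ℕ) (G : SimpleGraph (Fin n))
    (hG : IsChordalGraph G)
    (X : Matrix (Fin n) (Fin n) ℝ)
    (hcliques : ∀ C : Finset (Fin n), G.IsClique (C : Set (Fin n)) →
      (∀ D : Finset (Fin n), G.IsClique (D : Set (Fin n)) → C ⊆ D → C = D) →
      (X.submatrix (fun i : ↥C => (i : Fin n)) (fun i : ↥C => (i : Fin n))).PosSemidef) :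
    ∃ Y : Matrix (Fin n) (Fin n) ℝ, Y.PosSemidef ∧
      (∀ i, Y i i = X i i) ∧ ∀ i j, G.Adj i j → Y i j = X i j := by
  have hX : ∀ C : Finset (Fin n), G.IsClique (C : Set (Fin n)) →
      (X.submatrix ((↑) : C → Fin n) (↑)).PosSemidef := by
    intro C hC
    obtain ⟨D, hCD, hD⟩ :=
      Finite.exists_le_maximal (p := fun D : Finset (Fin n) ↦ G.IsClique (D : Set (Fin n))) hC
    have hXD := hcliques D hD.prop fun D' hD' hDD' ↦ le_antisymm hDD' (hD.le_of_ge hD' hDD')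
    exact hXD.submatrix fun i : C ↦ ⟨i, hCD i.2⟩
  obtain ⟨Y, hY, hdiag, hadj⟩ := hG.exists_posSemidef_completion_on hX Finset.univ
  exact ⟨Y, hY, fun i ↦ hdiag i (Finset.mem_univ i),
    fun i j h ↦ hadj i (Finset.mem_univ i) j (Finset.mem_univ j) h⟩

/-- PSD matrix completion over chordal patterns: let `G` be a chordal
simple graph on `{1, …, n}` and `X` a symmetric partial matrix specified on the
diagonal and on the edges of `G`. If for every maximal clique `C` of `G` the principal
submatrix `X[C]` is positive semidefinite, then `X` can be completed to a positive
semidefinite matrix, i.e. there is a PSD `X̂ ∈ S^n` agreeing with `X` on the diagonal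
and on all positions `(i, j) ∈ E`. -/
theorem chordal_psd_completion (n : ℕ) (G : SimpleGraph (Fin n))
    (hG : IsChordalGraph G)
    (X : Matrix (Fin n) (Fin n) ℝ) (hXsymm : X.IsSymm)
    (hcliques : ∀ C : Finset (Fin n), G.IsClique (C : Set (Fin n)) →
      (∀ D : Finset (Fin n), G.IsClique (D : Set (Fin n)) → C ⊆ D → C = D) →
      (X.submatrix (fun i : ↥C => (i : Fin n)) (fun i : ↥C => (i : Fin n))).PosSemidef) :
    ∃ Y : Matrix (Fin n) (Fin n) ℝ, Y.PosSemidef ∧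
      (∀ i, Y i i = X i i) ∧ ∀ i j, G.Adj i j → Y i j = X i j :=
  chordal_psd_completion_general n G hG X hcliques
end
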